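/- Let X₁, ε, η be independent standard Gaussian random variables, and define Y = X₁ + ε and X₂ = Y + η. Then the population squared-error risk of the coefficient vector (1/2, 1/2) equals 1/2, while the risk of the true coefficient vector (1, 0) equals 1; hence E[(Y − (1/2)X₁ − (1/2)X₂)²] = 1/2 < 1 = E[(Y − X₁)²], i.e., including the spurious variable X₂ strictly decreases the population prediction risk within this environment. -/

import Mathlib

open MeasureTheory ProbabilityTheory Real Filter
open scoped ENNReal NNReal

lemma aux_deriv (x : ℝ) :
    HasDerivAt (fun x : ℝ => -Real.exp (-(x ^ 2 / 2))) (x * Real.exp (-(x ^ 2 / 2))) x := by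
  have h1 : HasDerivAt (fun x : ℝ => -(x ^ 2 / 2)) (-x) x := by
    have := (hasDerivAt_pow 2 x).div_const 2
    exact (show HasDerivAt (fun x : ℝ => x ^ 2 / 2) x x by simpa using this).neg
  have h2 := h1.exp
  convert (show HasDerivAt (fun x : ℝ => -Real.exp (-(x ^ 2 / 2)))
    (-(Real.exp (-(x ^ 2 / 2)) * -x)) x from h2.neg) using 1
  ring

lemma aux_int_exp : Integrable (fun x : ℝ => Real.exp (-(x ^ 2 / 2))) := by
  have := integrable_exp_neg_mul_sq (b := (1/2 : ℝ)) (by norm_num)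
  convert this using 2 with x
  ring_nf

lemma aux_int_xexp : Integrable (fun x : ℝ => x * Real.exp (-(x ^ 2 / 2))) := by
  have := integrable_mul_exp_neg_mul_sq (b := (1/2 : ℝ)) (by norm_num)
  convert this using 2 with x
  ring_nf

lemma aux_int_x2exp : Integrable (fun x : ℝ => x ^ 2 * Real.exp (-(x ^ 2 / 2))) := by
  have h := integrable_rpow_mul_exp_neg_mul_sq (b := (1/2 : ℝ)) (by norm_num) (s := 2) (by norm_num)
  have h2 : ∀ x : ℝ, x ^ (2:ℝ) = x ^ 2 := fun x => by
    rw [show (2:ℝ) = ((2:ℕ):ℝ) by norm_num, Real.rpow_natCast]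
  simp_rw [h2] at h
  convert h using 2 with x
  ring_nf

lemma aux_exp_eq : (∫ x : ℝ, Real.exp (-(x ^ 2 / 2))) = Real.sqrt (2 * π) := by
  have := integral_gaussian (1/2 : ℝ)
  rw [show π / (1/2 : ℝ) = 2 * π by ring] at this
  rw [← this]
  congr 1 with x
  ring_nf

lemma aux_x2exp_eq : (∫ x : ℝ, x ^ 2 * Real.exp (-(x ^ 2 / 2))) = Real.sqrt (2 * π) := by
  have h := integral_mul_deriv_eq_deriv_mul_of_integrable
    (u := fun x : ℝ => x) (u' := fun _ => (1 : ℝ))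
    (v := fun x : ℝ => -Real.exp (-(x ^ 2 / 2)))
    (v' := fun x : ℝ => x * Real.exp (-(x ^ 2 / 2)))
    (fun x _ => hasDerivAt_id x) (fun x _ => aux_deriv x)
    (by simpa [Pi.mul_def, mul_comm, mul_left_comm, pow_two, mul_assoc] using aux_int_x2exp)
    (by simp only [Pi.mul_def, one_mul]; exact aux_int_exp.neg)
    (by simp only [Pi.mul_def, mul_neg]; exact aux_int_xexp.neg)
  have h2 : (∫ x : ℝ, x * (x * Real.exp (-(x ^ 2 / 2)))) = ∫ x : ℝ, x ^ 2 * Real.exp (-(x ^ 2 / 2)) := by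
    congr 1 with x; ring
  rw [h2] at h
  rw [h]
  rw [← aux_exp_eq]
  simp [integral_neg]

lemma aux_xexp_eq : (∫ x : ℝ, x * Real.exp (-(x ^ 2 / 2))) = 0 := by
  exact integral_eq_zero_of_hasDerivAt_of_integrable (fun x => aux_deriv x) aux_int_xexp
    aux_int_exp.neg

noncomputable def gpdf : ℝ → ℝ := fun x => (Real.sqrt (2 * π))⁻¹ * Real.exp (-(x ^ 2 / 2))

lemma gpdf_nonneg (x : ℝ) : 0 ≤ gpdf x :=
  mul_nonneg (inv_nonneg.2 (Real.sqrt_nonneg _)) (Real.exp_pos _).le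

lemma gpdf_meas : Measurable gpdf :=
  measurable_const.mul (((measurable_id.pow_const 2).div_const 2).neg.exp)

lemma aux_gauss_eq :
    gaussianReal 0 1 = (volume : Measure ℝ).withDensity
      (fun x => ((gpdf x).toNNReal : ℝ≥0∞)) := by
  rw [gaussianReal_of_var_ne_zero _ one_ne_zero]
  congr 1
  ext x
  rw [gaussianPDF]
  rw [show ((gpdf x).toNNReal : ℝ≥0∞) = ENNReal.ofReal (gpdf x) from rfl]
  congr 1
  simp only [gaussianPDFReal, gpdf, NNReal.coe_one, mul_one, sub_zero]
  congr 1
  ring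

lemma aux_integral_gauss (g : ℝ → ℝ) :
    ∫ x, g x ∂(gaussianReal 0 1) = ∫ x, gpdf x * g x := by
  rw [aux_gauss_eq, integral_withDensity_eq_integral_smul gpdf_meas.real_toNNReal]
  congr 1 with x
  simp [NNReal.smul_def, Real.coe_toNNReal _ (gpdf_nonneg x)]

lemma aux_integrable_gauss (g : ℝ → ℝ) :
    Integrable g (gaussianReal 0 1) ↔ Integrable (fun x => gpdf x * g x) := by
  rw [aux_gauss_eq, integrable_withDensity_iff_integrable_smul gpdf_meas.real_toNNReal]
  constructor <;> intro h <;> [skip; skip] <;>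
  · refine h.congr (Filter.Eventually.of_forall fun x => ?_)
    simp [NNReal.smul_def, Real.coe_toNNReal _ (gpdf_nonneg x)]

lemma sqrt2pi_pos : 0 < Real.sqrt (2 * π) :=
  Real.sqrt_pos.2 (by positivity)

lemma gauss_m1 : ∫ x, x ∂(gaussianReal 0 1) = 0 := by
  rw [aux_integral_gauss]
  have : (fun x : ℝ => gpdf x * x)
      = fun x => (Real.sqrt (2 * π))⁻¹ * (x * Real.exp (-(x ^ 2 / 2))) := by
    ext x; simp [gpdf]; ring
  rw [this, integral_const_mul, aux_xexp_eq, mul_zero]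

lemma gauss_m2 : ∫ x, x ^ 2 ∂(gaussianReal 0 1) = 1 := by
  rw [aux_integral_gauss]
  have : (fun x : ℝ => gpdf x * x ^ 2)
      = fun x => (Real.sqrt (2 * π))⁻¹ * (x ^ 2 * Real.exp (-(x ^ 2 / 2))) := by
    ext x; simp [gpdf]; ring
  rw [this, integral_const_mul, aux_x2exp_eq, inv_mul_cancel₀ sqrt2pi_pos.ne']

lemma gauss_i1 : Integrable (fun x : ℝ => x) (gaussianReal 0 1) := by
  rw [aux_integrable_gauss]
  have : (fun x : ℝ => gpdf x * x)
      = fun x => (Real.sqrt (2 * π))⁻¹ * (x * Real.exp (-(x ^ 2 / 2))) := by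
    ext x; simp [gpdf]; ring
  rw [this]
  exact aux_int_xexp.const_mul _

lemma gauss_i2 : Integrable (fun x : ℝ => x ^ 2) (gaussianReal 0 1) := by
  rw [aux_integrable_gauss]
  have : (fun x : ℝ => gpdf x * x ^ 2)
      = fun x => (Real.sqrt (2 * π))⁻¹ * (x ^ 2 * Real.exp (-(x ^ 2 / 2))) := by
    ext x; simp [gpdf]; ring
  rw [this]
  exact aux_int_x2exp.const_mul _

section Main

open MeasureTheory ProbabilityTheory

set_option linter.unusedSectionVars false

variable {Ω : Type*} [MeasureSpace Ω] [IsProbabilityMeasure (volume : Measure Ω)]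

lemma aux_sq_integrable {ε : Ω → ℝ} (hε : Measurable ε)
    (hεlaw : Measure.map ε volume = gaussianReal 0 1) :
    Integrable (fun ω => ε ω ^ 2) volume := by
  have h := (integrable_map_measure (g := fun x : ℝ => x ^ 2)
    (measurable_id.pow_const 2).aestronglyMeasurable hε.aemeasurable).mp
    (by rw [hεlaw]; exact gauss_i2)
  exact h

lemma aux_integrable {ε : Ω → ℝ} (hε : Measurable ε)
    (hεlaw : Measure.map ε volume = gaussianReal 0 1) :
    Integrable ε volume := by
  have h := (integrable_map_measure (g := fun x : ℝ => x)
    measurable_id.aestronglyMeasurable hε.aemeasurable).mp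
    (by rw [hεlaw]; exact gauss_i1)
  exact h

lemma aux_sq_moment {ε : Ω → ℝ} (hε : Measurable ε)
    (hεlaw : Measure.map ε volume = gaussianReal 0 1) :
    ∫ ω, ε ω ^ 2 = 1 := by
  have h : (∫ ω, ε ω ^ 2) = ∫ x, x ^ 2 ∂(Measure.map ε volume) :=
    (integral_map hε.aemeasurable (measurable_id.pow_const 2).aestronglyMeasurable).symm
  rw [h, hεlaw, gauss_m2]

lemma aux_moment {ε : Ω → ℝ} (hε : Measurable ε)
    (hεlaw : Measure.map ε volume = gaussianReal 0 1) :
    ∫ ω, ε ω = 0 := by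
  have h : (∫ ω, ε ω) = ∫ x, x ∂(Measure.map ε volume) :=
    (integral_map hε.aemeasurable measurable_id.aestronglyMeasurable).symm
  rw [h, hεlaw, gauss_m1]

end Main

/-- For `X₁, ε, η` independent standard Gaussians, `Y = X₁ + ε`, `X₂ = Y + η`, the population
squared-error risk of the coefficient vector `(1/2, 1/2)` equals `1/2`, while the risk of the
true coefficient vector `(1, 0)` equals `1`; in particular including the spurious variable `X₂`
strictly decreases the population prediction risk. -/
theorem spurious_variable_decreases_risk
    {Ω : Type*} [MeasureSpace Ω] [IsProbabilityMeasure (volume : Measure Ω)]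
    (X₁ ε η : Ω → ℝ)
    (hX₁ : Measurable X₁) (hε : Measurable ε) (hη : Measurable η)
    (hindep : iIndepFun
      ![X₁, ε, η] volume)
    (hX₁law : Measure.map X₁ volume = gaussianReal 0 1)
    (hεlaw : Measure.map ε volume = gaussianReal 0 1)
    (hηlaw : Measure.map η volume = gaussianReal 0 1)
    (Y X₂ : Ω → ℝ)
    (hY : Y = fun ω => X₁ ω + ε ω)
    (hX₂ : X₂ = fun ω => Y ω + η ω) :
    (∫ ω, (Y ω - (1 / 2 : ℝ) * X₁ ω - (1 / 2 : ℝ) * X₂ ω) ^ 2) = 1 / 2 ∧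
    (∫ ω, (Y ω - X₁ ω) ^ 2) = 1 ∧
    (∫ ω, (Y ω - (1 / 2 : ℝ) * X₁ ω - (1 / 2 : ℝ) * X₂ ω) ^ 2) <
      ∫ ω, (Y ω - X₁ ω) ^ 2 := by
  subst hX₂ hY
  have hε2 : Integrable (fun ω => ε ω ^ 2) volume := aux_sq_integrable hε hεlaw
  have hη2 : Integrable (fun ω => η ω ^ 2) volume := aux_sq_integrable hη hηlaw
  have hε1 : Integrable ε volume := aux_integrable hε hεlaw
  have hη1 : Integrable η volume := aux_integrable hη hηlaw
  have Eε2 : ∫ ω, ε ω ^ 2 = 1 := aux_sq_moment hε hεlaw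
  have Eη2 : ∫ ω, η ω ^ 2 = 1 := aux_sq_moment hη hηlaw
  have Eε : ∫ ω, ε ω = 0 := aux_moment hε hεlaw
  have hεη : IndepFun ε η volume := by
    have h := hindep.indepFun (show (1 : Fin 3) ≠ 2 by decide)
    simpa using h
  have hεηint : Integrable (fun ω => ε ω * η ω) volume := hεη.integrable_mul hε1 hη1
  have Eεη : ∫ ω, ε ω * η ω = 0 := by
    have h : ∫ ω, ε ω * η ω = (∫ ω, ε ω) * ∫ ω, η ω :=
      hεη.integral_mul_eq_mul_integral hε.aestronglyMeasurable hη.aestronglyMeasurable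
    rw [h, Eε, zero_mul]
  have risk2 : (∫ ω, ((fun ω => X₁ ω + ε ω) ω - X₁ ω) ^ 2) = 1 := by
    have : (fun ω => ((fun ω => X₁ ω + ε ω) ω - X₁ ω) ^ 2) = fun ω => ε ω ^ 2 := by
      ext ω; ring
    rw [this, Eε2]
  have risk1 : (∫ ω, ((fun ω => X₁ ω + ε ω) ω - (1 / 2 : ℝ) * X₁ ω
      - (1 / 2 : ℝ) * (fun ω => (fun ω => X₁ ω + ε ω) ω + η ω) ω) ^ 2) = 1 / 2 := by
    have hkey : (fun ω => ((fun ω => X₁ ω + ε ω) ω - (1 / 2 : ℝ) * X₁ ω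
        - (1 / 2 : ℝ) * (fun ω => (fun ω => X₁ ω + ε ω) ω + η ω) ω) ^ 2)
        = fun ω => (1 / 4 : ℝ) * ε ω ^ 2 + (1 / 4 : ℝ) * η ω ^ 2
          - (1 / 2 : ℝ) * (ε ω * η ω) := by
      ext ω; simp only; ring
    have h14ε : Integrable (fun ω => (1 / 4 : ℝ) * ε ω ^ 2) volume := hε2.const_mul _
    have h14η : Integrable (fun ω => (1 / 4 : ℝ) * η ω ^ 2) volume := hη2.const_mul _
    have h12 : Integrable (fun ω => (1 / 2 : ℝ) * (ε ω * η ω)) volume := hεηint.const_mul _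
    have hsum : Integrable (fun ω => (1 / 4 : ℝ) * ε ω ^ 2 + (1 / 4 : ℝ) * η ω ^ 2) volume :=
      h14ε.add h14η
    rw [hkey, integral_sub hsum h12, integral_add h14ε h14η, integral_const_mul,
      integral_const_mul, integral_const_mul, Eε2, Eη2, Eεη]
    norm_num
  refine ⟨risk1, risk2, ?_⟩
  rw [risk1, risk2]
  norm_num
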